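/- Lemma (sign and magnitude of λ_1). Let ℓ, c, α, r_y > 0 and suppose A_1 < 0 and A_1² ≥ 4B_1. Then λ_1 < 0 and B_1/(−A_1) ≤ −λ_1 ≤ 2B_1/(−A_1). In particular, there is an absolute constant K ≥ 1 such that for every ε ∈ (0,1) and D_Y > 0, if r_y := ε/D_Y ≤ ℓ, α := 1/(4(ℓ + r_y)) and c := r_y²·α/(16ℓ²), then A_1 < 0, A_1² ≥ 4B_1, and ε²/(K·ℓ²·D_Y²) ≤ −λ_1 ≤ K·ε²/(ℓ²·D_Y²). -/

import Mathlib

/-!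
The two roots of `x² − A₁x + B₁` multiply to `B₁`, and for `A₁ < 0` the other root
`(A₁ − √(A₁² − 4B₁))/2` has absolute value between `−A₁/2` and `−A₁`; dividing `B₁` by it gives
`B₁/(−A₁) ≤ −λ₁ ≤ 2B₁/(−A₁)`.

For the parameter choice, `ℓc ≤ αr_y/16`, so `A₁` is `−αr_y` up to a factor in `[15/16, 2]`, and
`−λ₁ ≈ B₁/(αr_y) = 2ℓc`, which is of order `r_y²/ℓ² = ε²/(ℓ²D_Y²)`.
-/

noncomputable section

/-- `A₁ = ℓc − α r_y (1 + 3ℓc)`. -/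
def A1 (l c α ry : ℝ) : ℝ := l * c - α * ry * (1 + 3 * l * c)

/-- `B₁ = 2 ℓ c α r_y`. -/
def B1 (l c α ry : ℝ) : ℝ := 2 * l * c * α * ry

/-- `λ₁ = (A₁ + √(A₁² − 4B₁))/2`. -/
noncomputable def lam1 (l c α ry : ℝ) : ℝ :=
  (A1 l c α ry + Real.sqrt ((A1 l c α ry) ^ 2 - 4 * B1 l c α ry)) / 2

theorem neg_add_sqrt_div_two_mem_Icc {a b : ℝ} (ha : a < 0) (hb : 0 ≤ b)
    (hdisc : 4 * b ≤ a ^ 2) :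
    -((a + √(a ^ 2 - 4 * b)) / 2) ∈ Set.Icc (b / -a) (2 * b / -a) := by
  set s := √(a ^ 2 - 4 * b)
  have hs : 0 ≤ s := Real.sqrt_nonneg _
  have hs2 : s ^ 2 = a ^ 2 - 4 * b := Real.sq_sqrt (by linarith)
  have hsa : s ≤ -a := by nlinarith
  constructor
  · rw [div_le_iff₀ (neg_pos.2 ha)]
    nlinarith [sq_nonneg (a + s)]
  · rw [le_div_iff₀ (neg_pos.2 ha)]
    nlinarith

section Lam1

variable {l c α ry : ℝ} (hl : 0 < l) (hc : 0 < c) (hα : 0 < α) (hry : 0 < ry)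
include hl hc hα hry

theorem B1_pos : 0 < B1 l c α ry := by
  unfold B1
  positivity

theorem neg_lam1_mem_Icc (hA : A1 l c α ry < 0) (hdisc : 4 * B1 l c α ry ≤ A1 l c α ry ^ 2) :
    -lam1 l c α ry ∈ Set.Icc (B1 l c α ry / -A1 l c α ry) (2 * B1 l c α ry / -A1 l c α ry) :=
  neg_add_sqrt_div_two_mem_Icc hA (B1_pos hl hc hα hry).le hdisc

theorem lam1_neg (hA : A1 l c α ry < 0) (hdisc : 4 * B1 l c α ry ≤ A1 l c α ry ^ 2) :
    lam1 l c α ry < 0 := by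
  have h := (neg_lam1_mem_Icc hl hc hα hry hA hdisc).1
  have : 0 < B1 l c α ry / -A1 l c α ry := div_pos (B1_pos hl hc hα hry) (neg_pos.2 hA)
  linarith

variable (hsmall : 16 * (l * c) ≤ α * ry) (hstep : α * ry ≤ 1)
include hsmall

theorem A1_le : A1 l c α ry ≤ -(15 / 16) * (α * ry) := by
  unfold A1
  nlinarith [mul_pos (mul_pos hl hc) (mul_pos hα hry)]

theorem four_B1_le_sq_A1 : 4 * B1 l c α ry ≤ A1 l c α ry ^ 2 := by
  have hA := A1_le hl hc hα hry hsmall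
  have ht : 0 < α * ry := mul_pos hα hry
  calc 4 * B1 l c α ry = 8 * (l * c) * (α * ry) := by unfold B1; ring
    _ ≤ (15 / 16 * (α * ry)) ^ 2 := by nlinarith
    _ ≤ A1 l c α ry ^ 2 := by nlinarith

omit hα hry in
include hstep in
theorem neg_A1_le : -A1 l c α ry ≤ 2 * (α * ry) := by
  unfold A1
  nlinarith [mul_pos hl hc]

include hstep in
theorem neg_lam1_bounds : l * c ≤ -lam1 l c α ry ∧ -lam1 l c α ry ≤ 5 * (l * c) := by
  have hA := A1_le hl hc hα hry hsmall
  have hA' := neg_A1_le hl hc hsmall hstep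
  have ht : 0 < α * ry := mul_pos hα hry
  have hB : B1 l c α ry = 2 * (l * c) * (α * ry) := by unfold B1; ring
  have hnA : 0 < -A1 l c α ry := by linarith
  obtain ⟨hlow, hupp⟩ :=
    neg_lam1_mem_Icc hl hc hα hry (by linarith) (four_B1_le_sq_A1 hl hc hα hry hsmall)
  constructor
  · refine le_trans ?_ hlow
    rw [le_div_iff₀ hnA, hB]
    nlinarith [mul_pos hl hc]
  · refine hupp.trans ?_
    rw [div_le_iff₀ hnA, hB]
    nlinarith [mul_pos hl hc]

end Lam1

theorem regime_of_parameter_choice {l ry α c : ℝ} (hl : 0 < l) (hry : 0 < ry) (hryl : ry ≤ l)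
    (hα : α = 1 / (4 * (l + ry))) (hc : c = ry ^ 2 * α / (16 * l ^ 2)) :
    16 * (l * c) ≤ α * ry ∧ α * ry ≤ 1 ∧
      ry ^ 2 / (128 * l ^ 2) ≤ l * c ∧ l * c ≤ ry ^ 2 / (64 * l ^ 2) := by
  have hlc : l * c = ry ^ 2 / (64 * l * (l + ry)) := by
    rw [hc, hα]
    field_simp
    ring
  have hgap : α * ry - 16 * (l * c) = ry * (l - ry) / (4 * l * (l + ry)) := by
    rw [hlc, hα]
    field_simp
    ring
  refine ⟨?_, ?_, ?_, ?_⟩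
  · have : 0 ≤ ry * (l - ry) / (4 * l * (l + ry)) :=
      div_nonneg (mul_nonneg hry.le (sub_nonneg.2 hryl)) (by positivity)
    linarith
  · rw [hα, div_mul_eq_mul_div, div_le_one (by positivity)]
    linarith
  · rw [hlc, div_le_div_iff₀ (by positivity) (by positivity)]
    nlinarith [mul_nonneg (mul_nonneg (sq_nonneg ry) hl.le) (sub_nonneg.2 hryl)]
  · rw [hlc, div_le_div_iff₀ (by positivity) (by positivity)]
    nlinarith [mul_pos (pow_pos hry 2) (mul_pos hl hry)]

/-- Sign and magnitude of the eigenvalue `λ₁` of the Perturbed GDA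
recursion matrix on the hard GS instance. -/
theorem lam1_sign_and_magnitude :
    (∀ l c α ry : ℝ, 0 < l → 0 < c → 0 < α → 0 < ry →
      A1 l c α ry < 0 → (A1 l c α ry) ^ 2 ≥ 4 * B1 l c α ry →
      lam1 l c α ry < 0 ∧
        B1 l c α ry / (-(A1 l c α ry)) ≤ -(lam1 l c α ry) ∧
        -(lam1 l c α ry) ≤ 2 * B1 l c α ry / (-(A1 l c α ry))) ∧
    ∃ K : ℝ, 1 ≤ K ∧ ∀ l ε Dy : ℝ, 0 < l → 0 < ε → ε < 1 → 0 < Dy →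
      ε / Dy ≤ l →
      ∀ ry α c : ℝ, ry = ε / Dy → α = 1 / (4 * (l + ry)) →
        c = ry ^ 2 * α / (16 * l ^ 2) →
        A1 l c α ry < 0 ∧ (A1 l c α ry) ^ 2 ≥ 4 * B1 l c α ry ∧
        ε ^ 2 / (K * l ^ 2 * Dy ^ 2) ≤ -(lam1 l c α ry) ∧
        -(lam1 l c α ry) ≤ K * ε ^ 2 / (l ^ 2 * Dy ^ 2) := by
  refine ⟨fun l c α ry hl hc hα hry hA hdisc =>
    ⟨lam1_neg hl hc hα hry hA hdisc, neg_lam1_mem_Icc hl hc hα hry hA hdisc⟩,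
    128, by norm_num, ?_⟩
  intro l ε Dy hl hε _ hDy hle ry α c hry hα hc
  have hry0 : 0 < ry := hry ▸ div_pos hε hDy
  have hα0 : 0 < α := hα ▸ by positivity
  have hc0 : 0 < c := hc ▸ by positivity
  obtain ⟨hsmall, hstep, hlow, hupp⟩ := regime_of_parameter_choice hl hry0 (hry ▸ hle) hα hc
  obtain ⟨hlam_low, hlam_upp⟩ := neg_lam1_bounds hl hc0 hα0 hry0 hsmall hstep
  have hε2 : ε ^ 2 / Dy ^ 2 = ry ^ 2 := by rw [hry, div_pow]
  refine ⟨by linarith [A1_le hl hc0 hα0 hry0 hsmall, mul_pos hα0 hry0],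
    four_B1_le_sq_A1 hl hc0 hα0 hry0 hsmall, ?_, ?_⟩
  · calc ε ^ 2 / (128 * l ^ 2 * Dy ^ 2) = ry ^ 2 / (128 * l ^ 2) := by
          rw [← hε2]; field_simp
      _ ≤ -lam1 l c α ry := hlow.trans hlam_low
  · calc -lam1 l c α ry ≤ 5 * (ry ^ 2 / (64 * l ^ 2)) := hlam_upp.trans (by linarith)
      _ = 5 / 64 * (ry ^ 2 / l ^ 2) := by ring
      _ ≤ 128 * (ry ^ 2 / l ^ 2) := by linarith [div_nonneg (sq_nonneg ry) (sq_nonneg l)]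
      _ = 128 * ε ^ 2 / (l ^ 2 * Dy ^ 2) := by rw [← hε2]; field_simp
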